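/- arXiv:1903.03316 — 2 statements merged into one kernel-verified Lean document; each statement's English description precedes it below -/
import Mathlib

section
/- The bivariate inverse hypergeometric pmf with arbitrary parameters N₁, N₂, N₃, k sums to 1 over its support {0,…,N₁}×{0,…,N₂}. -/
/-!
The summand depends on `(x, y)` only through `s = x + y` and the factor `C(N₁, x) C(N₂, y)`, so
Vandermonde's identity collapses the double sum to the univariate inverse hypergeometric sum, with
`C(N₁ + N₂, s)` in place of that factor. Writing `k = a + 1`, `N₃ = a + b + 1` and
`N₁ + N₂ = s + t`, the `s`-th term is `C(s + a, a) C(t + b, b) / C(N, N₃)`: the `k`-th of the `N₃`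
marked items is drawn at position `s + k`, with `a` marked items before it and `b` after it. These
numerators sum to `C(N, N₃)` by the upper Vandermonde identity, which is Chu–Vandermonde at the
negative arguments `-(a + 1)` and `-(b + 1)`.
-/

open BigOperators Finset Nat

theorem Ring.choose_neg_natCast_add_one (r m : ℕ) :
    Ring.choose (-((r : ℤ) + 1)) m = (-1) ^ m * ((m + r).choose r : ℤ) := by
  rw [Ring.choose_neg, show (r : ℤ) + 1 + m - 1 = ((m + r : ℕ) : ℤ) by push_cast; ring,
    Ring.choose_natCast, Units.smul_def, Int.coe_negOnePow_natCast, Nat.choose_symm_add]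
  rfl

theorem Nat.sum_antidiagonal_add_choose_mul_add_choose (a b n : ℕ) :
    ∑ p ∈ antidiagonal n, (p.1 + a).choose a * (p.2 + b).choose b =
      (n + a + b + 1).choose (a + b + 1) := by
  have hvdm := Ring.add_choose_eq n (Commute.all (-((a : ℤ) + 1)) (-((b : ℤ) + 1)))
  rw [show -((a : ℤ) + 1) + -((b : ℤ) + 1) = -(((a + b + 1 : ℕ) : ℤ) + 1) by push_cast; ring]
    at hvdm
  simp only [Ring.choose_neg_natCast_add_one] at hvdm
  rw [sum_congr rfl fun p hp => by
    rw [mul_mul_mul_comm, ← pow_add, mem_antidiagonal.mp hp], ← mul_sum] at hvdm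
  rw [show n + a + b + 1 = n + (a + b + 1) by ring]
  exact_mod_cast (mul_left_cancel₀ (pow_ne_zero n (neg_ne_zero.mpr one_ne_zero)) hvdm).symm

theorem sum_range_choose_mul_choose_mul_add {R : Type*} [CommSemiring R] (m n : ℕ)
    (f : ℕ → R) :
    ∑ x ∈ range (m + 1), ∑ y ∈ range (n + 1), (m.choose x * n.choose y : R) * f (x + y) =
      ∑ s ∈ range (m + n + 1), ((m + n).choose s : R) * f s := by
  calc _ = ∑ x ∈ range (m + n + 1), ∑ y ∈ range (m + n + 1 - x),
        (m.choose x * n.choose y : R) * f (x + y) := by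
        refine (sum_congr rfl fun x hx => sum_subset ?_ fun y _ hy => ?_).trans
          (sum_subset (range_subset_range.mpr (by omega)) fun x _ hx => ?_)
        · exact range_subset_range.mpr (by rw [mem_range] at hx; omega)
        · simp [choose_eq_zero_of_lt (show n < y by simpa using hy)]
        · simp [choose_eq_zero_of_lt (show m < x by simpa using hx)]
    _ = ∑ s ∈ range (m + n + 1), ∑ x ∈ range (s + 1),
        (m.choose x * n.choose (s - x) : R) * f (x + (s - x)) := (sum_range_diag_flip _ _).symm
    _ = _ := by
        refine sum_congr rfl fun s _ => ?_
        rw [add_choose_eq, Nat.sum_antidiagonal_eq_sum_range_succ_mk, Nat.cast_sum, sum_mul]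
        refine sum_congr rfl fun x hx => ?_
        rw [Nat.add_sub_cancel' (by simpa [Nat.lt_succ_iff] using hx)]
        push_cast
        rfl

theorem add_choose_mul_inverseHypergeom_eq {K : Type*} [Field K] [CharZero K] (s t a b : ℕ) :
    ((s + t).choose s : K) * ((b + 1) / (t + b + 1) * (a + b + 1).choose a /
        (s + t + a + b + 1).choose (s + a)) =
      (s + a).choose a * (t + b).choose b / (s + t + a + b + 1).choose (a + b + 1) := by
  have h {n i j : ℕ} (hn : i + j = n) : (n.choose i : K) = n ! / (i ! * j !) :=
    hn ▸ cast_add_choose K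
  rw [h rfl, h (j := b + 1) (by ring), h (i := s + a) (j := t + b + 1) (by ring),
    h (j := s) (by ring), h (j := t) (by ring), h (j := s + t) (by ring),
    factorial_succ b, factorial_succ (t + b)]
  have htb : (t : K) + b + 1 ≠ 0 := by exact_mod_cast succ_ne_zero (t + b)
  have hb : (b : K) + 1 ≠ 0 := by exact_mod_cast succ_ne_zero b
  push_cast
  field_simp

/-- the bivariate inverse hypergeometric pmf with arbitrary
parameters `N₁, N₂, N₃, k` (with `1 ≤ k ≤ N₃`, `N = N₁+N₂+N₃`) sums to 1 over
its support `{0,…,N₁} × {0,…,N₂}`. -/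
theorem inverse_hypergeometric_sums_to_one
    (N₁ N₂ N₃ k : ℕ) (hk1 : 1 ≤ k) (hk2 : k ≤ N₃) :
    ∑ x ∈ Finset.range (N₁ + 1), ∑ y ∈ Finset.range (N₂ + 1),
      (((N₃ : ℝ) - (k : ℝ) + 1) /
          ((N₁ + N₂ + N₃ : ℕ) - ((x : ℝ) + (y : ℝ) + (k : ℝ) - 1))) *
        ((Nat.choose N₁ x * Nat.choose N₂ y * Nat.choose N₃ (k - 1) : ℕ) : ℝ) /
          ((Nat.choose (N₁ + N₂ + N₃) (x + y + k - 1) : ℕ) : ℝ) = 1 := by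
  obtain ⟨a, rfl⟩ : ∃ a, k = a + 1 := ⟨k - 1, by omega⟩
  obtain ⟨b, rfl⟩ : ∃ b, N₃ = a + b + 1 := ⟨N₃ - (a + 1), by omega⟩
  let T (s : ℕ) : ℝ := (b + 1) / (((N₁ + N₂ : ℕ) : ℝ) - s + b + 1) * (a + b + 1).choose a /
    (N₁ + N₂ + a + b + 1).choose (s + a)
  calc _ = ∑ x ∈ range (N₁ + 1), ∑ y ∈ range (N₂ + 1),
        (N₁.choose x * N₂.choose y : ℝ) * T (x + y) := by
        refine sum_congr rfl fun x _ => sum_congr rfl fun y _ => ?_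
        simp only [T, ← add_assoc, Nat.add_sub_cancel]
        push_cast
        ring
    _ = ∑ p ∈ antidiagonal (N₁ + N₂), ((p.1 + a).choose a * (p.2 + b).choose b : ℕ) /
        ((N₁ + N₂ + a + b + 1).choose (a + b + 1) : ℝ) := by
        rw [sum_range_choose_mul_choose_mul_add, Nat.sum_antidiagonal_eq_sum_range_succ_mk]
        refine sum_congr rfl fun s hs => ?_
        obtain ⟨t, ht⟩ : ∃ t, N₁ + N₂ = s + t := ⟨N₁ + N₂ - s, by rw [mem_range] at hs; omega⟩
        simp only [T, ht, Nat.add_sub_cancel_left]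
        push_cast
        rw [← add_choose_mul_inverseHypergeom_eq]
        ring
    _ = 1 := by
        rw [← sum_div, ← Nat.cast_sum, Nat.sum_antidiagonal_add_choose_mul_add_choose]
        exact div_self (by exact_mod_cast (Nat.choose_pos (by omega)).ne')
end

section
/- If g(i,j) ≥ 0 for all (i,j), exactly one pair (i₀,j₀) attains the maximum value g(i₀,j₀) > 0, G̃ = B·D is diagonalizable, and the initial probability vector has nonzero component on the dominant eigenvector, then the sequence of descendant distributions v(P^{(k)}) converges to the normalized dominant eigenvector of G̃. -/
open Matrix BigOperators Finset Filter


lemma backsub15 {m n : ℕ} (g : Fin m → Fin n → ℝ)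
    (Gt : Matrix (Fin n × Fin m) (Fin n × Fin m) ℝ)
    (hGt : Gt = (Matrix.of fun p q : Fin n × Fin m =>
        if p.1 ≤ q.1 ∧ p.2 ≤ q.2 then (1 : ℝ) else 0) *
      Matrix.diagonal (fun q : Fin n × Fin m => g q.2 q.1))
    (lam : ℝ) (x : Fin n × Fin m → ℝ) (hx : Gt *ᵥ x = lam • x)
    (h0 : ∀ p : Fin n × Fin m, g p.2 p.1 = lam → x p = 0) :
    x = 0 := by
  have hent : ∀ p q : Fin n × Fin m,
      Gt p q = if p.1 ≤ q.1 ∧ p.2 ≤ q.2 then g q.2 q.1 else 0 := by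
    intro p q
    simp [hGt, Matrix.mul_diagonal, ite_mul]
  set S : Fin n × Fin m → Finset (Fin n × Fin m) :=
    fun p => univ.filter (fun q => (p.1 ≤ q.1 ∧ p.2 ≤ q.2) ∧ q ≠ p) with hS
  have hrow : ∀ p, g p.2 p.1 * x p + ∑ q ∈ S p, g q.2 q.1 * x q = lam * x p := by
    intro p
    have h := congrFun hx p
    rw [Matrix.mulVec, Pi.smul_apply] at h
    simp only [dotProduct, hent, smul_eq_mul] at h
    rw [← h]
    have : ∀ q, (if p.1 ≤ q.1 ∧ p.2 ≤ q.2 then g q.2 q.1 else 0) * x q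
        = if p.1 ≤ q.1 ∧ p.2 ≤ q.2 then g q.2 q.1 * x q else 0 := by
      intro q; split <;> simp
    simp only [this]
    rw [← Finset.sum_filter]
    have hmem : p ∈ univ.filter (fun q : Fin n × Fin m => p.1 ≤ q.1 ∧ p.2 ≤ q.2) := by
      simp
    rw [← Finset.add_sum_erase _ _ hmem]
    congr 1
    apply Finset.sum_congr
    · ext q
      simp only [hS, Finset.mem_erase, Finset.mem_filter, Finset.mem_univ, true_and, and_true]
      tauto
    · intros; rfl
  -- strong induction on card of S p
  suffices h : ∀ k : ℕ, ∀ p, (S p).card ≤ k → x p = 0 by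
    funext p; exact h (S p).card p le_rfl
  intro k
  induction k with
  | zero =>
    intro p hp
    have hSp : S p = ∅ := Finset.card_eq_zero.mp (Nat.le_zero.mp hp)
    have := hrow p
    rw [hSp] at this
    simp at this
    rcases this with h1 | h1
    · exact h0 p h1
    · exact h1
  | succ k ih =>
    intro p hp
    have hz : ∀ q ∈ S p, x q = 0 := by
      intro q hq
      simp only [hS, Finset.mem_filter, Finset.mem_univ, true_and] at hq
      obtain ⟨⟨h1, h2⟩, h3⟩ := hq
      apply ih
      have hsub : S q ⊆ S p := by
        intro r hr
        simp only [hS, Finset.mem_filter, Finset.mem_univ, true_and] at hr ⊢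
        obtain ⟨⟨r1, r2⟩, r3⟩ := hr
        refine ⟨⟨le_trans h1 r1, le_trans h2 r2⟩, ?_⟩
        intro hrp
        exact h3 (Prod.ext (le_antisymm (hrp ▸ r1) h1) (le_antisymm (hrp ▸ r2) h2))
      have hqin : q ∈ S p := by
        simp only [hS, Finset.mem_filter, Finset.mem_univ, true_and]
        exact ⟨⟨h1, h2⟩, h3⟩
      have hqnot : q ∉ S q := by
        simp [hS]
      have : (S q).card < (S p).card :=
        Finset.card_lt_card (Finset.ssubset_iff_of_subset hsub |>.mpr ⟨q, hqin, hqnot⟩)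
      omega
    have := hrow p
    rw [Finset.sum_eq_zero (fun q hq => by rw [hz q hq]; ring)] at this
    simp at this
    rcases this with h1 | h1
    · exact h0 p h1
    · exact h1

/-- in the setting of Section 3, if `g ≥ 0` with a unique strict
maximizer `(i₀,j₀)` where `g(i₀,j₀) > 0`, `G̃ = B·D` is diagonalizable (with
eigenbasis `u` and eigenvalues `μ`, the dominant one being `g(i₀,j₀)` with
dominant eigenvector `w` having nonnegative entries), and the parent
probability vector `v(P*)` has nonzero coefficient on the dominant eigenvector
(with all iterates nonzero and nonnegative), then the descendant distributions
`G̃ᵏ v(P*)/‖G̃ᵏ v(P*)‖₁` converge to `w/‖w‖₁`. -/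
theorem descendants_converge_to_dominant_eigenvector (m n : ℕ)
    (g : Fin m → Fin n → ℝ)
    (hgnonneg : ∀ i j, 0 ≤ g i j)
    (i₀ : Fin m) (j₀ : Fin n) (hgpos : 0 < g i₀ j₀)
    (hmax : ∀ ij : Fin m × Fin n, ij ≠ (i₀, j₀) → g ij.1 ij.2 < g i₀ j₀)
    (Gt : Matrix (Fin n × Fin m) (Fin n × Fin m) ℝ)
    (hGt : Gt = (Matrix.of fun p q : Fin n × Fin m =>
        if p.1 ≤ q.1 ∧ p.2 ≤ q.2 then (1 : ℝ) else 0) *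
      Matrix.diagonal (fun q : Fin n × Fin m => g q.2 q.1))
    -- diagonalizability: an eigenbasis of G̃
    (u : (Fin n × Fin m) → (Fin n × Fin m → ℝ)) (μ : (Fin n × Fin m) → ℝ)
    (hbasis : LinearIndependent ℝ u)
    (heig : ∀ q, Gt *ᵥ u q = μ q • u q)
    (hμdom : μ (j₀, i₀) = g i₀ j₀)
    -- the dominant eigenvector and its nonnegativity
    (w : Fin n × Fin m → ℝ) (hw : w = u (j₀, i₀)) (hwnonneg : ∀ p, 0 ≤ w p)
    -- the parent probability matrix and its vectorization
    (Pstar : Matrix (Fin m) (Fin n) ℝ)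
    (hPnonneg : ∀ i j, 0 ≤ Pstar i j) (hPsum : ∑ i, ∑ j, Pstar i j = 1)
    (vP : Fin n × Fin m → ℝ) (hvP : ∀ p, vP p = Pstar p.2 p.1)
    -- nonzero component on the dominant eigenvector
    (c : (Fin n × Fin m) → ℝ) (hvPdecomp : vP = ∑ q, c q • u q)
    (hc : c (j₀, i₀) ≠ 0)
    -- all iterates are nonzero with nonnegative entries
    (hiter : ∀ k : ℕ, (Gt ^ k) *ᵥ vP ≠ 0 ∧ ∀ p, 0 ≤ ((Gt ^ k) *ᵥ vP) p) :
    Tendsto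
      (fun k : ℕ => (∑ p, |((Gt ^ k) *ᵥ vP) p|)⁻¹ • ((Gt ^ k) *ᵥ vP))
      atTop (nhds ((∑ p, |w p|)⁻¹ • w)) := by
  set lam : ℝ := g i₀ j₀ with hlam
  set q₀ : Fin n × Fin m := (j₀, i₀) with hq₀
  -- only the maximizer has value lam
  have hgsingle : ∀ p : Fin n × Fin m, g p.2 p.1 = lam → p = q₀ := by
    intro p hp
    by_contra hne
    have : (p.2, p.1) ≠ (i₀, j₀) := by
      intro h
      apply hne
      have h1 : p.2 = i₀ := congrArg Prod.fst h
      have h2 : p.1 = j₀ := congrArg Prod.snd h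
      exact Prod.ext h2 h1
    exact absurd hp (ne_of_lt (hmax (p.2, p.1) this))
  have hune : ∀ q, u q ≠ 0 := fun q => hbasis.ne_zero q
  -- dominant coordinate of the dominant eigenvector is nonzero
  have hwq₀ : u q₀ q₀ ≠ 0 := by
    intro h
    apply hune q₀
    apply backsub15 g Gt hGt lam (u q₀) (hμdom ▸ heig q₀)
    intro p hp
    rw [hgsingle p hp]; exact h
  -- all other eigenvalues are strictly dominated
  have hdom : ∀ q, q ≠ q₀ → |μ q| < lam := by
    intro q hq
    -- μ q is a value of g
    have hrange : ∃ p : Fin n × Fin m, g p.2 p.1 = μ q := by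
      by_contra hno
      push_neg at hno
      exact hune q (backsub15 g Gt hGt (μ q) (u q) (heig q)
        (fun p hp => absurd hp (hno p)))
    obtain ⟨p, hp⟩ := hrange
    have hle : μ q ≤ lam := by
      rcases eq_or_ne (p.2, p.1) (i₀, j₀) with h | h
      · rw [← hp]
        exact le_of_eq (by
          rw [show p.2 = i₀ from congrArg Prod.fst h,
              show p.1 = j₀ from congrArg Prod.snd h])
      · exact le_of_lt (hp ▸ hmax (p.2, p.1) h)
    have hnn : 0 ≤ μ q := hp ▸ hgnonneg p.2 p.1
    have hneq : μ q ≠ lam := by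
      intro heq
      -- two independent eigenvectors for lam: contradiction via backsub
      set x : Fin n × Fin m → ℝ := u q₀ q₀ • u q - u q q₀ • u q₀ with hx
      have hxeig : Gt *ᵥ x = lam • x := by
        rw [hx, Matrix.mulVec_sub, Matrix.mulVec_smul, Matrix.mulVec_smul,
          heig q, heig q₀, heq, hμdom, smul_sub, smul_comm, smul_comm (u q q₀)]
      have hx0 : x = 0 := by
        apply backsub15 g Gt hGt lam x hxeig
        intro p hp'
        rw [hgsingle p hp']
        simp [hx]
        ring
      -- contradicts linear independence
      have einj : Function.Injective (fun b : Bool => if b then q else q₀) := by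
        intro a b hab
        cases a <;> cases b <;> simp only [if_true, Bool.false_eq_true, if_false] at hab
        · rfl
        · exact absurd hab.symm hq
        · exact absurd hab hq
        · rfl
      have li := hbasis.comp _ einj
      rw [Fintype.linearIndependent_iff] at li
      have hzero := li (fun b => if b then u q₀ q₀ else -(u q q₀)) ?_ true
      · simp only [if_true] at hzero
        exact hwq₀ hzero
      · rw [Fintype.sum_bool]
        simp only [if_true, Bool.false_eq_true, if_false, Function.comp_apply, neg_smul]
        rw [← sub_eq_add_neg]
        exact hx ▸ hx0
    rw [abs_of_nonneg hnn]
    exact lt_of_le_of_ne hle hneq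
  -- the iterate formula
  have hformula : ∀ k : ℕ, (Gt ^ k) *ᵥ vP = ∑ q, (c q * μ q ^ k) • u q := by
    intro k
    induction k with
    | zero => simp [hvPdecomp]
    | succ k ih =>
      rw [pow_succ', ← Matrix.mulVec_mulVec, ih]
      have hsum : Gt *ᵥ (∑ q, (c q * μ q ^ k) • u q)
          = ∑ q, (c q * μ q ^ k) • (Gt *ᵥ u q) := by
        simp only [← Matrix.mulVecLin_apply, map_sum, LinearMap.map_smul]
      rw [hsum]
      apply Finset.sum_congr rfl
      intro q _
      rw [heig q, smul_smul]
      congr 1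
      ring
  set N : (Fin n × Fin m → ℝ) → ℝ := fun v => ∑ p, |v p| with hN
  have hNcont : Continuous N := by
    apply continuous_finset_sum
    intro p _
    exact (continuous_apply p).abs
  set L : Fin n × Fin m → ℝ := c q₀ • w with hL
  set y : ℕ → (Fin n × Fin m → ℝ) := fun k => ∑ q, (c q * (μ q / lam) ^ k) • u q with hy
  have hlamne : lam ≠ 0 := ne_of_gt hgpos
  have hyz : ∀ k, y k = ((lam ^ k)⁻¹) • ((Gt ^ k) *ᵥ vP) := by
    intro k
    rw [hformula k, Finset.smul_sum]
    apply Finset.sum_congr rfl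
    intro q _
    rw [smul_smul, div_pow]
    congr 1
    field_simp
    try ring
  have hytend : Tendsto y atTop (nhds L) := by
    have hLsum : L = ∑ q, (if q = q₀ then c q₀ • u q₀ else 0) := by
      rw [Finset.sum_ite_eq' Finset.univ q₀ (fun _ => c q₀ • u q₀)]
      simp [hL, hw]
    rw [hLsum, hy]
    apply tendsto_finset_sum
    intro q _
    rcases eq_or_ne q q₀ with h | h
    · subst h
      simp only [if_true, hμdom, div_self hlamne, one_pow, mul_one]
      exact tendsto_const_nhds
    · simp only [if_neg h]
      have h1 : Tendsto (fun k : ℕ => (μ q / lam) ^ k) atTop (nhds 0) := by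
        apply tendsto_pow_atTop_nhds_zero_of_abs_lt_one
        rw [abs_div, abs_of_pos hgpos]
        exact (div_lt_one hgpos).mpr (hdom q h)
      have h2 := (h1.const_mul (c q)).smul_const (u q)
      simpa using h2
  have hwne : w ≠ 0 := hw ▸ hune q₀
  obtain ⟨p₁, hp₁⟩ : ∃ p, w p ≠ 0 := by
    by_contra hcon; push_neg at hcon; exact hwne (funext hcon)
  have hNw : 0 < N w := by
    apply Finset.sum_pos' (fun p _ => abs_nonneg _)
    exact ⟨p₁, Finset.mem_univ p₁, abs_pos.mpr hp₁⟩
  have hNL : N L = |c q₀| * N w := by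
    simp only [hN, hL, Pi.smul_apply, smul_eq_mul, abs_mul, ← Finset.mul_sum]
  have hNLpos : 0 < N L := hNL ▸ mul_pos (abs_pos.mpr hc) hNw
  have hfeq : ∀ k : ℕ, (∑ p, |((Gt ^ k) *ᵥ vP) p|)⁻¹ • ((Gt ^ k) *ᵥ vP)
      = (N (y k))⁻¹ • y k := by
    intro k
    have hlk : (0:ℝ) < lam ^ k := pow_pos hgpos k
    have hNy : N (y k) = (lam ^ k)⁻¹ * ∑ p, |((Gt ^ k) *ᵥ vP) p| := by
      rw [hyz k]
      simp only [hN, Pi.smul_apply, smul_eq_mul, abs_mul,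
        abs_of_pos (inv_pos.mpr hlk), ← Finset.mul_sum]
    rw [hNy, hyz k, smul_smul, mul_inv, inv_inv]
    congr 1
    rw [mul_right_comm, mul_inv_cancel₀ (ne_of_gt hlk), one_mul]
  have hmain : Tendsto (fun k => (N (y k))⁻¹ • y k) atTop (nhds ((N L)⁻¹ • L)) :=
    (((hNcont.tendsto L).comp hytend).inv₀ (ne_of_gt hNLpos)).smul hytend
  have hcpos : 0 < c q₀ := by
    rcases lt_trichotomy (c q₀) 0 with hclt | hc0 | hcgt
    · exfalso
      have hwp : 0 < w p₁ := lt_of_le_of_ne (hwnonneg p₁) (Ne.symm hp₁)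
      have hinv : 0 < (N L)⁻¹ := inv_pos.mpr hNLpos
      have hlimp : ((N L)⁻¹ • L) p₁ < 0 := by
        simp only [hL, Pi.smul_apply, smul_eq_mul]
        have : c q₀ * w p₁ < 0 := mul_neg_of_neg_of_pos hclt hwp
        exact mul_neg_of_pos_of_neg hinv this
      have htp : Tendsto (fun k => ((N (y k))⁻¹ • y k) p₁) atTop
          (nhds (((N L)⁻¹ • L) p₁)) := (tendsto_pi_nhds.mp hmain) p₁
      have hge : 0 ≤ ((N L)⁻¹ • L) p₁ := by
        refine ge_of_tendsto htp ?_
        filter_upwards with k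
        rw [← hfeq k]
        have h2 := (hiter k).2 p₁
        have h1 : (0:ℝ) ≤ (∑ p, |((Gt ^ k) *ᵥ vP) p|)⁻¹ :=
          inv_nonneg.mpr (Finset.sum_nonneg fun _ _ => abs_nonneg _)
        exact mul_nonneg h1 h2
      linarith
    · exact absurd hc0 hc
    · exact hcgt
  have hLid : (N L)⁻¹ • L = (∑ p, |w p|)⁻¹ • w := by
    rw [hL, hNL, abs_of_pos hcpos, smul_smul]
    have hNwdef : N w = ∑ p, |w p| := rfl
    rw [← hNwdef]
    congr 1
    rw [mul_inv]
    field_simp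
  have hfun : (fun k : ℕ => (∑ p, |((Gt ^ k) *ᵥ vP) p|)⁻¹ • ((Gt ^ k) *ᵥ vP))
      = fun k => (N (y k))⁻¹ • y k := funext hfeq
  rw [hfun, ← hLid]
  exact hmain
end
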